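/- arXiv:2212.13605 — 3 statements merged into one kernel-verified Lean document; each statement's English description precedes it below -/
import Mathlib

section
/- Let T be a complete first-order theory with infinite models in a countable language L, let M be an ℵ₁-saturated model of T, let A ⊆ M be countable, and let p ∈ S₁(A) be a simple type, witnessed by C ⊆ dcl(A) and the A-definable linear order (D,<). Then the set P(M) = C ∪ p(M) is an initial part of (D,<) (i.e., if b ∈ P(M), d ∈ D and d < b then d ∈ P(M)), and P(M) is type-definable over A; indeed P(M) is the set of realizations of the partial type {∃y(θ(y) ∧ x < y) : θ(y) ∈ p}. -/
open FirstOrder FirstOrder.Language Set Cardinal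

universe u v w

namespace PaperDef

variable {L : FirstOrder.Language.{u, v}}

/-- Valuation assigning parameters from `A` their own values and the
`n` free variables the values given by the tuple `x`. -/
def pval {M : Type w} {A : Set M} {n : ℕ} (x : Fin n → M) : ↥A ⊕ Fin n → M :=
  Sum.elim Subtype.val x

variable {M : Type w} [L.Structure M]

/-- The subset of `M` defined by an `L(A)`-formula in one free variable. -/
def defSet (A : Set M) (δ : L.Formula (↥A ⊕ Fin 1)) : Set M :=
  {a | δ.Realize (pval ![a])}

/-- The binary relation on `M` defined by an `L(A)`-formula in two free variables. -/
def defRel (A : Set M) (φ : L.Formula (↥A ⊕ Fin 2)) : M → M → Prop :=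
  fun a b => φ.Realize (pval ![a, b])

/-- The relation defined by `φ`, guarded so as to only hold on the set defined by `δ`
(the paper's convention of writing `x < y` for `x ∈ D ∧ y ∈ D ∧ x < y`). -/
def gRel (A : Set M) (δ : L.Formula (↥A ⊕ Fin 1)) (φ : L.Formula (↥A ⊕ Fin 2)) :
    M → M → Prop :=
  fun a b => a ∈ defSet A δ ∧ b ∈ defSet A δ ∧ defRel A φ a b

/-- The set of realizations in `M` of a set of `L(A)`-formulas in one free variable. -/
def typeSet (A : Set M) (p : Set (L.Formula (↥A ⊕ Fin 1))) : Set M :=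
  {a | ∀ φ ∈ p, φ.Realize (pval ![a])}

/-- A set of `L(A)`-formulas in `n` free variables is finitely satisfiable in `M`. -/
def FinSat (A : Set M) {n : ℕ} (p : Set (L.Formula (↥A ⊕ Fin n))) : Prop :=
  ∀ s : Finset (L.Formula (↥A ⊕ Fin n)), ↑s ⊆ p →
    ∃ x : Fin n → M, ∀ φ ∈ s, Formula.Realize φ (pval x)

/-- A complete `n`-type over `A` (relative to the complete theory of `M` with
parameters in `A`): a maximal finitely satisfiable set of formulas. -/
def IsCompleteType (A : Set M) {n : ℕ} (p : Set (L.Formula (↥A ⊕ Fin n))) : Prop :=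
  FinSat A p ∧ ∀ φ : L.Formula (↥A ⊕ Fin n), φ ∈ p ∨ BoundedFormula.not φ ∈ p

/-- `M` is ℵ₀-saturated: every finitely satisfiable set of formulas in one free
variable with parameters from a finite subset of `M` is realized in `M`. -/
def IsAleph0Saturated (L : FirstOrder.Language.{u, v}) (M : Type w) [L.Structure M] : Prop :=
  ∀ A : Set M, A.Finite → ∀ p : Set (L.Formula (↥A ⊕ Fin 1)),
    FinSat A p → (typeSet A p).Nonempty

/-- `M` is ℵ₁-saturated: every finitely satisfiable set of formulas in one free
variable with parameters from a countable subset of `M` is realized in `M`. -/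
def IsAleph1Saturated (L : FirstOrder.Language.{u, v}) (M : Type w) [L.Structure M] : Prop :=
  ∀ A : Set M, A.Countable → ∀ p : Set (L.Formula (↥A ⊕ Fin 1)),
    FinSat A p → (typeSet A p).Nonempty

/-- The definable closure of `A` in `M`. -/
def dclSet (L : FirstOrder.Language.{u, v}) {M : Type w} [L.Structure M] (A : Set M) : Set M :=
  {a | ∃ φ : L.Formula (↥A ⊕ Fin 1),
    φ.Realize (pval ![a]) ∧ ∀ b : M, φ.Realize (pval ![b]) → b = a}

/-- `r` is a (strict) linear order on the set `D`. -/
def IsLinearOn {X : Type*} (r : X → X → Prop) (D : Set X) : Prop :=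
  (∀ a ∈ D, ¬r a a) ∧
  (∀ a ∈ D, ∀ b ∈ D, ∀ c ∈ D, r a b → r b c → r a c) ∧
  (∀ a ∈ D, ∀ b ∈ D, a = b ∨ r a b ∨ r b a)

/-- The linear order `r` on `D` is discrete: every element other than the maximum
has an immediate successor and every element other than the minimum has an
immediate predecessor. -/
def IsDiscreteOn {X : Type*} (r : X → X → Prop) (D : Set X) : Prop :=
  (∀ a ∈ D, (∃ b ∈ D, r a b) → ∃ b ∈ D, r a b ∧ ∀ c ∈ D, r a c → c = b ∨ r b c) ∧
  (∀ a ∈ D, (∃ b ∈ D, r b a) → ∃ b ∈ D, r b a ∧ ∀ c ∈ D, r c a → c = b ∨ r c b)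

/-- `C` is an initial part of the order `(D, r)`. -/
def IsInitialPart {X : Type*} (r : X → X → Prop) (D C : Set X) : Prop :=
  C ⊆ D ∧ ∀ c ∈ C, ∀ d ∈ D, r d c → d ∈ C

/-- `(C, r)` has order type ω: `C` is infinite and every element has only
finitely many predecessors in `C`. -/
def HasOrderTypeOmega {X : Type*} (r : X → X → Prop) (C : Set X) : Prop :=
  C.Infinite ∧ ∀ c ∈ C, {c' ∈ C | r c' c}.Finite

/-- `p` is a simple type over `A`, witnessed by `C ⊆ dcl(A)` and the `A`-definable
linear order `(D, <)` given by the formulas `δ` (defining `D`) and `lt` (defining `<`). -/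
def IsSimpleWitness (A : Set M) (p : Set (L.Formula (↥A ⊕ Fin 1))) (C : Set M)
    (δ : L.Formula (↥A ⊕ Fin 1)) (lt : L.Formula (↥A ⊕ Fin 2)) : Prop :=
  IsCompleteType A p ∧
  C.Infinite ∧
  C ⊆ dclSet L A ∧
  IsLinearOn (gRel A δ lt) (defSet A δ) ∧
  IsInitialPart (gRel A δ lt) (defSet A δ) C ∧
  HasOrderTypeOmega (gRel A δ lt) C ∧
  ∀ φ : L.Formula (↥A ⊕ Fin 1),
    φ ∈ p ↔ {c ∈ C | ¬φ.Realize (pval ![c])}.Finite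

/-- `b` is the immediate successor of `a` in the order `(P, r)`. -/
def SuccIn {X : Type*} (r : X → X → Prop) (P : Set X) (a b : X) : Prop :=
  a ∈ P ∧ b ∈ P ∧ r a b ∧ ∀ c ∈ P, r a c → c = b ∨ r b c

/-- `zIter S k a b` says that `b = Sᵏ(a)`, where negative iterates of `S` are
interpreted via the (partial) inverse of `S`. -/
def zIter {X : Type*} (S : X → X) (k : ℤ) (a b : X) : Prop :=
  if 0 ≤ k then S^[k.toNat] a = b else S^[(-k).toNat] b = a

/-- Isomorphism as an equivalence relation on countably infinite models of `T`
(with underlying set in `Type 0`). -/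
def countableModelSetoid (T : L.Theory) :
    Setoid {N : Theory.ModelType.{u, v, 0} T // Countable N ∧ Infinite N} where
  r N₁ N₂ := Nonempty (N₁.1 ≃[L] N₂.1)
  iseqv := ⟨fun N => ⟨FirstOrder.Language.Equiv.refl L N.1⟩,
    fun e => e.map FirstOrder.Language.Equiv.symm,
    fun e f => Nonempty.map2 (fun i j => j.comp i) e f⟩

/-- The number of countably infinite models of `T` up to isomorphism. -/
noncomputable def numCountableModels (T : L.Theory) : Cardinal :=
  #(Quotient (countableModelSetoid T))


section Helpers

variable {A : Set M}

/-- Lift a one-variable formula to a two-variable formula, using variable `i`. -/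
noncomputable def lift1 (A : Set M) (i : Fin 2) (θ : L.Formula (↥A ⊕ Fin 1)) :
    L.Formula (↥A ⊕ Fin 2) :=
  θ.relabel (Sum.map id (fun _ => i))

lemma realize_lift1 {i : Fin 2} {θ : L.Formula (↥A ⊕ Fin 1)} {x : Fin 2 → M} :
    (lift1 A i θ).Realize (pval x) ↔ θ.Realize (pval ![x i]) := by
  rw [lift1, Formula.realize_relabel]
  have h : pval (A := A) x ∘ Sum.map id (fun _ : Fin 1 => i) = pval ![x i] := by
    funext z
    rcases z with a | j
    · rfl
    · fin_cases j <;> rfl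
  rw [h]

/-- Swap the two variables of a two-variable formula. -/
noncomputable def flip2 (A : Set M) (φ : L.Formula (↥A ⊕ Fin 2)) :
    L.Formula (↥A ⊕ Fin 2) :=
  φ.relabel (Sum.map id ![1, 0])

lemma realize_flip2 {φ : L.Formula (↥A ⊕ Fin 2)} {a b : M} :
    (flip2 A φ).Realize (pval ![a, b]) ↔ φ.Realize (pval ![b, a]) := by
  rw [flip2, Formula.realize_relabel]
  have h : pval (A := A) ![a, b] ∘ Sum.map id ![(1 : Fin 2), 0] = pval ![b, a] := by
    funext z
    rcases z with c | j
    · rfl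
    · fin_cases j <;> rfl
  rw [h]

/-- Existentially quantify the second variable of a two-variable formula. -/
noncomputable def ex2 (A : Set M) (φ : L.Formula (↥A ⊕ Fin 2)) : L.Formula (↥A ⊕ Fin 1) :=
  Formula.iExs (Fin 1) (φ.relabel (Sum.elim (fun a => Sum.inl (Sum.inl a))
    ![Sum.inl (Sum.inr 0), Sum.inr (0 : Fin 1)]))

lemma realize_ex2 {φ : L.Formula (↥A ⊕ Fin 2)} {a : M} :
    (ex2 A φ).Realize (pval ![a]) ↔ ∃ b : M, φ.Realize (pval ![a, b]) := by
  rw [ex2, Formula.realize_iExs]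
  simp only [Formula.realize_relabel, Function.comp_def]
  have h : ∀ i : Fin 1 → M,
      (fun z => Sum.elim (pval (A := A) ![a]) i
        ((Sum.elim (fun c => Sum.inl (Sum.inl c))
          ![Sum.inl (Sum.inr 0), Sum.inr (0 : Fin 1)]) z)) = pval ![a, i 0] := by
    intro i
    funext z
    rcases z with c | j
    · rfl
    · fin_cases j <;> rfl
  constructor
  · rintro ⟨i, hi⟩
    exact ⟨i 0, by rwa [h i] at hi⟩
  · rintro ⟨b, hb⟩
    exact ⟨fun _ => b, by rw [h (fun _ => b)]; exact hb⟩

/-- The formula defining the guarded relation `gRel`. -/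
noncomputable def gFor (A : Set M) (δ : L.Formula (↥A ⊕ Fin 1))
    (lt : L.Formula (↥A ⊕ Fin 2)) : L.Formula (↥A ⊕ Fin 2) :=
  lift1 A 0 δ ⊓ (lift1 A 1 δ ⊓ lt)

lemma realize_gFor {δ : L.Formula (↥A ⊕ Fin 1)} {lt : L.Formula (↥A ⊕ Fin 2)} {a b : M} :
    (gFor A δ lt).Realize (pval ![a, b]) ↔ gRel A δ lt a b := by
  simp only [gFor, Formula.realize_inf, realize_lift1, Matrix.cons_val_zero,
    Matrix.cons_val_one, Matrix.head_cons]
  rfl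

end Helpers

/-- Lemma 2(a). If `p ∈ S₁(A)` is simple, witnessed by `C` and
`(D, <)`, then `P(M) = C ∪ p(M)` is an initial part of `(D, <)` and is exactly the
set of realizations of the partial type `{∃y (θ(y) ∧ x < y) : θ ∈ p}`; in
particular it is type-definable over `A`. -/
theorem statement5 (L : FirstOrder.Language.{u, v}) (hL : L.card ≤ ℵ₀)
    (T : L.Theory) (hT : T.IsComplete)
    (M : Type w) [L.Structure M] (hMT : M ⊨ T) (hMinf : Infinite M)
    (hsat : IsAleph1Saturated L M)
    (A : Set M) (hA : A.Countable)
    (p : Set (L.Formula (↥A ⊕ Fin 1))) (C : Set M)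
    (δ : L.Formula (↥A ⊕ Fin 1)) (lt : L.Formula (↥A ⊕ Fin 2))
    (hp : IsSimpleWitness A p C δ lt) :
    IsInitialPart (gRel A δ lt) (defSet A δ) (C ∪ typeSet A p) ∧
    C ∪ typeSet A p = {a : M | ∀ θ ∈ p, ∃ b : M, θ.Realize (pval ![b]) ∧ gRel A δ lt a b} ∧
    ∃ Pt : Set (L.Formula (↥A ⊕ Fin 1)), typeSet A Pt = C ∪ typeSet A p := by
  classical
  obtain ⟨⟨hfs, hcomp⟩, hCinf, hCdcl, ⟨hirr, htrans, htri⟩, ⟨hCD, hCinitial⟩,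
    ⟨-, hpred⟩, hiff⟩ := hp
  -- notation
  have hCδ : ∀ c ∈ C, δ.Realize (pval ![c]) := fun c hc => hCD hc
  -- δ belongs to p
  have hδp : δ ∈ p := by
    rw [hiff]
    have h0 : {c ∈ C | ¬δ.Realize (pval ![c])} = ∅ := by
      ext c
      simp only [Set.mem_setOf_eq, Set.mem_empty_iff_false, iff_false, not_and, not_not]
      exact fun hc => hCδ c hc
    rw [h0]
    exact Set.finite_empty
  have htypeD : ∀ a ∈ typeSet A p, a ∈ defSet A δ := fun a ha => ha δ hδp
  -- realized formulas belong to p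
  have hmem : ∀ (χ : L.Formula (↥A ⊕ Fin 1)) (b : M), b ∈ typeSet A p →
      χ.Realize (pval ![b]) → χ ∈ p := by
    intro χ b hb hχ
    rcases hcomp χ with h | h
    · exact h
    · exact absurd hχ (hb _ h)
  -- can pick elements of C avoiding any finite set
  have hpick : ∀ S : Set M, S.Finite → ∃ c ∈ C, c ∉ S := by
    intro S hS
    obtain ⟨c, hc⟩ := (hCinf.diff hS).nonempty
    exact ⟨c, hc.1, hc.2⟩
  -- everything in D above something in C but not in C is above all of C
  have hgtC : ∀ a ∈ defSet A δ, a ∉ C → ∀ c ∈ C, gRel A δ lt c a := by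
    intro a haD haC c hc
    rcases htri a haD c (hCD hc) with h | h | h
    · exact absurd (h ▸ hc) haC
    · exact absurd (hCinitial c hc a haD h) haC
    · exact h
  -- {c' ∈ C | ¬ c < c'} is finite for c ∈ C
  have hfin_notgt : ∀ c ∈ C, {c' ∈ C | ¬gRel A δ lt c c'}.Finite := by
    intro c hc
    apply Set.Finite.subset ((hpred c hc).union (Set.finite_singleton c))
    rintro c' ⟨hc', hn⟩
    rcases htri c (hCD hc) c' (hCD hc') with h | h | h
    · exact Or.inr h.symm
    · exact absurd h hn
    · exact Or.inl ⟨hc', h⟩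
  -- the successor-type formula semantics
  have hsF : ∀ (θ : L.Formula (↥A ⊕ Fin 1)) (a : M),
      (ex2 A (lift1 A 1 θ ⊓ gFor A δ lt)).Realize (pval ![a]) ↔
        ∃ b : M, θ.Realize (pval ![b]) ∧ gRel A δ lt a b := by
    intro θ a
    simp only [realize_ex2, Formula.realize_inf, realize_lift1, realize_gFor,
      Matrix.cons_val_one, Matrix.head_cons, Matrix.cons_val_zero]
  -- KEY: anything satisfying the partial type is in C ∪ p(M)
  have key : ∀ a : M, (∀ θ ∈ p, ∃ b : M, θ.Realize (pval ![b]) ∧ gRel A δ lt a b) →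
      a ∈ C ∪ typeSet A p := by
    intro a ha
    obtain ⟨b0, -, hb0r⟩ := ha δ hδp
    have haD : a ∈ defSet A δ := hb0r.1
    by_cases haC : a ∈ C
    · exact Or.inl haC
    refine Or.inr fun φ hφ => ?_
    by_contra hnφ
    set S := {y ∈ C | ¬φ.Realize (pval ![y])} with hSdef
    have hSfin : S.Finite := (hiff φ).1 hφ
    have hSsub : S ⊆ C := fun y hy => hy.1
    have hbig : (S ∪ ⋃ s ∈ S, {y ∈ C | gRel A δ lt y s}).Finite :=
      hSfin.union (hSfin.biUnion fun s hs => hpred s (hSsub hs))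
    obtain ⟨c, hc, hcS⟩ := hpick _ hbig
    have hcgtS : ∀ s ∈ S, gRel A δ lt s c := by
      intro s hs
      rcases htri c (hCD hc) s (hCD (hSsub hs)) with h | h | h
      · exact absurd (Or.inl (h ▸ hs)) hcS
      · exact absurd (Or.inr (Set.mem_biUnion hs (show c ∈ {y ∈ C | gRel A δ lt y s} from ⟨hc, h⟩))) hcS
      · exact h
    obtain ⟨ψ, hψ, hψu⟩ := hCdcl hc
    set g := ex2 A (lift1 A 1 ψ ⊓ flip2 A (gFor A δ lt)) with hgdef
    have hg : ∀ x : M, g.Realize (pval ![x]) ↔ gRel A δ lt c x := by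
      intro x
      rw [hgdef]
      simp only [realize_ex2, Formula.realize_inf, realize_lift1, realize_flip2,
        realize_gFor, Matrix.cons_val_one, Matrix.head_cons]
      constructor
      · rintro ⟨b, hb1, hb2⟩
        rwa [hψu b hb1] at hb2
      · intro h
        exact ⟨c, hψ, h⟩
    set χ := ex2 A (flip2 A (gFor A δ lt) ⊓ lift1 A 1 (BoundedFormula.not φ ⊓ g))
      with hχdef
    have hχ : ∀ x : M, χ.Realize (pval ![x]) ↔
        ∃ y : M, gRel A δ lt y x ∧ ¬φ.Realize (pval ![y]) ∧ gRel A δ lt c y := by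
      intro x
      rw [hχdef]
      simp only [realize_ex2, Formula.realize_inf, realize_lift1, realize_flip2,
        realize_gFor, Formula.realize_not, Matrix.cons_val_one, Matrix.head_cons, hg,
        Matrix.cons_val_zero]
    set θ := g ⊓ BoundedFormula.not χ with hθdef
    have hθp : θ ∈ p := by
      rw [hiff]
      apply Set.Finite.subset (hfin_notgt c hc)
      rintro c' ⟨hc', hnθ⟩
      refine ⟨hc', fun hrcc' => hnθ ?_⟩
      rw [hθdef, Formula.realize_inf]
      refine ⟨(hg c').2 hrcc', ?_⟩
      rw [Formula.realize_not, hχ]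
      rintro ⟨y, hyc', hyφ, hcy⟩
      have hyC : y ∈ C := hCinitial c' hc' y hyc'.1 hyc'
      have hyS : y ∈ S := ⟨hyC, hyφ⟩
      exact hirr c (hCD hc)
        (htrans c (hCD hc) y (hCD hyC) c (hCD hc) hcy (hcgtS y hyS))
    obtain ⟨b, hbθ, hab⟩ := ha θ hθp
    rw [hθdef, Formula.realize_inf, Formula.realize_not] at hbθ
    exact hbθ.2 ((hχ b).2 ⟨a, hab, hnφ, hgtC a haD haC c hc⟩)
  -- elements of C satisfy the partial type
  have hC2 : ∀ a ∈ C, ∀ θ ∈ p, ∃ b : M, θ.Realize (pval ![b]) ∧ gRel A δ lt a b := by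
    intro a ha θ hθ
    have hfin : ({y ∈ C | ¬θ.Realize (pval ![y])} ∪
        ({y ∈ C | gRel A δ lt y a} ∪ {a})).Finite :=
      ((hiff θ).1 hθ).union ((hpred a ha).union (Set.finite_singleton a))
    obtain ⟨b, hbC, hbn⟩ := hpick _ hfin
    refine ⟨b, ?_, ?_⟩
    · by_contra hn
      exact hbn (Or.inl ⟨hbC, hn⟩)
    · rcases htri a (hCD ha) b (hCD hbC) with h | h | h
      · exact absurd (Or.inr (Or.inr h.symm)) hbn
      · exact h
      · exact absurd (Or.inr (Or.inl ⟨hbC, h⟩)) hbn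
  -- Goal 2
  have goal2 : C ∪ typeSet A p =
      {a : M | ∀ θ ∈ p, ∃ b : M, θ.Realize (pval ![b]) ∧ gRel A δ lt a b} := by
    apply Set.Subset.antisymm
    · rintro a (ha | ha)
      · exact hC2 a ha
      · intro θ hθ
        have hsp : ex2 A (lift1 A 1 θ ⊓ gFor A δ lt) ∈ p := by
          rw [hiff]
          have h0 : {c ∈ C | ¬(ex2 A (lift1 A 1 θ ⊓ gFor A δ lt)).Realize (pval ![c])}
              = ∅ := by
            ext c
            simp only [Set.mem_setOf_eq, Set.mem_empty_iff_false, iff_false, not_and,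
              not_not]
            exact fun hc => (hsF θ c).2 (hC2 c hc θ hθ)
          rw [h0]
          exact Set.finite_empty
        exact (hsF θ a).1 (ha _ hsp)
    · exact fun a ha => key a ha
  refine ⟨?_, goal2, ?_⟩
  · constructor
    · rintro x (hx | hx)
      · exact hCD hx
      · exact htypeD x hx
    · rintro b (hb | hb) d hdD hdb
      · exact Or.inl (hCinitial b hb d hdD hdb)
      · exact key d fun θ hθ => ⟨b, hb θ hθ, hdb⟩
  · refine ⟨(fun θ => ex2 A (lift1 A 1 θ ⊓ gFor A δ lt)) '' p, ?_⟩
    rw [goal2]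
    ext a
    constructor
    · intro h θ hθ
      exact (hsF θ a).1 (h _ ⟨θ, hθ, rfl⟩)
    · rintro h φ ⟨θ, hθ, rfl⟩
      exact (hsF θ a).2 (h θ hθ)

end PaperDef
end

section
/- Let T be a complete first-order theory with infinite models in a countable language L, let M be an ℵ₁-saturated model of T, let A ⊆ M be countable, and let p ∈ S₁(A) be a simple type, witnessed by C ⊆ dcl(A) and the A-definable linear order (D,<). Then there exists an A-definable set D₀ ⊆ D such that D₀ is an initial part of (D,<), (D₀,<) is a discrete linear order, and P(M) = C ∪ p(M) ⊆ D₀. In particular, (p(M),<) is a discrete linear order. -/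
open FirstOrder FirstOrder.Language Set Cardinal

universe u v w

namespace PaperDef

variable {L : FirstOrder.Language.{u, v}}

variable {M : Type w} [L.Structure M]

section Aux

variable {A : Set M}

/-- substitution of free variables -/
def fsub {m n : ℕ} (f : Fin m → Fin n) (ψ : L.Formula (↥A ⊕ Fin m)) :
    L.Formula (↥A ⊕ Fin n) :=
  ψ.relabel (Sum.map id f)

lemma pval_comp_map {m n : ℕ} (f : Fin m → Fin n) (xs : Fin n → M) :
    (pval (A := A) xs) ∘ Sum.map id f = pval (xs ∘ f) := by
  funext a; rcases a with s | j <;> rfl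

lemma realize_fsub {m n : ℕ} {f : Fin m → Fin n} {ψ : L.Formula (↥A ⊕ Fin m)}
    {xs : Fin n → M} :
    (fsub f ψ).Realize (pval xs) ↔ ψ.Realize (pval (xs ∘ f)) := by
  rw [fsub, Formula.realize_relabel, pval_comp_map]

/-- existential quantification over a new last variable -/
noncomputable def exLast {n : ℕ} (φ : L.Formula (↥A ⊕ Fin (n + 1))) :
    L.Formula (↥A ⊕ Fin n) :=
  (φ.relabel (Sum.elim (fun s => Sum.inl (Sum.inl s))
    (fun j => Fin.lastCases (Sum.inr (0 : Fin 1)) (fun k => Sum.inl (Sum.inr k)) j))).iExs (Fin 1)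

noncomputable def allLast {n : ℕ} (φ : L.Formula (↥A ⊕ Fin (n + 1))) :
    L.Formula (↥A ⊕ Fin n) :=
  (φ.relabel (Sum.elim (fun s => Sum.inl (Sum.inl s))
    (fun j => Fin.lastCases (Sum.inr (0 : Fin 1)) (fun k => Sum.inl (Sum.inr k)) j))).iAlls (Fin 1)

lemma pval_elim_snoc {n : ℕ} (xs : Fin n → M) (i : Fin 1 → M) :
    (fun a => Sum.elim (pval (A := A) xs) i
      ((Sum.elim (fun s => Sum.inl (Sum.inl s))
        (fun j => Fin.lastCases (Sum.inr (0 : Fin 1)) (fun k => Sum.inl (Sum.inr k)) j)) a))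
      = pval (Fin.snoc xs (i 0)) := by
  funext a
  rcases a with s | j
  · rfl
  · refine Fin.lastCases ?_ (fun k => ?_) j
    · simp [pval, Fin.snoc_last]
    · simp [pval, Fin.snoc_castSucc]

lemma realize_exLast {n : ℕ} {φ : L.Formula (↥A ⊕ Fin (n + 1))} {xs : Fin n → M} :
    (exLast φ).Realize (pval xs) ↔ ∃ a : M, φ.Realize (pval (Fin.snoc xs a)) := by
  rw [exLast, Formula.realize_iExs]
  simp only [Formula.realize_relabel, Function.comp_def]
  constructor
  · rintro ⟨i, h⟩; rw [pval_elim_snoc] at h; exact ⟨i 0, h⟩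
  · rintro ⟨a, h⟩; refine ⟨fun _ => a, ?_⟩; rw [pval_elim_snoc]; exact h

lemma realize_allLast {n : ℕ} {φ : L.Formula (↥A ⊕ Fin (n + 1))} {xs : Fin n → M} :
    (allLast φ).Realize (pval xs) ↔ ∀ a : M, φ.Realize (pval (Fin.snoc xs a)) := by
  rw [allLast, Formula.realize_iAlls]
  simp only [Formula.realize_relabel, Function.comp_def]
  constructor
  · intro h a; have := h (fun _ => a); rwa [pval_elim_snoc] at this
  · intro h i; rw [pval_elim_snoc]; exact h (i 0)

/-- a one-variable formula evaluated at position `i` -/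
def fAt {n : ℕ} (φ : L.Formula (↥A ⊕ Fin 1)) (i : Fin n) : L.Formula (↥A ⊕ Fin n) :=
  fsub (fun _ => i) φ

lemma realize_fAt {n : ℕ} {φ : L.Formula (↥A ⊕ Fin 1)} {i : Fin n} {xs : Fin n → M} :
    (fAt φ i).Realize (pval xs) ↔ φ.Realize (pval ![xs i]) := by
  rw [fAt, realize_fsub]
  have : xs ∘ (fun _ : Fin 1 => i) = ![xs i] := by
    funext j; fin_cases j; rfl
  rw [this]

def ltAt {n : ℕ} (lt : L.Formula (↥A ⊕ Fin 2)) (i j : Fin n) : L.Formula (↥A ⊕ Fin n) :=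
  fsub ![i, j] lt

lemma realize_ltAt {n : ℕ} {lt : L.Formula (↥A ⊕ Fin 2)} {i j : Fin n} {xs : Fin n → M} :
    (ltAt lt i j).Realize (pval xs) ↔ defRel A lt (xs i) (xs j) := by
  rw [ltAt, realize_fsub]
  have : xs ∘ ![i, j] = ![xs i, xs j] := by
    funext k; fin_cases k <;> rfl
  rw [this]; rfl

def rAt {n : ℕ} (δ : L.Formula (↥A ⊕ Fin 1)) (lt : L.Formula (↥A ⊕ Fin 2)) (i j : Fin n) :
    L.Formula (↥A ⊕ Fin n) :=
  fAt δ i ⊓ fAt δ j ⊓ ltAt lt i j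

lemma realize_rAt {n : ℕ} {δ : L.Formula (↥A ⊕ Fin 1)} {lt : L.Formula (↥A ⊕ Fin 2)}
    {i j : Fin n} {xs : Fin n → M} :
    (rAt δ lt i j).Realize (pval xs) ↔ gRel A δ lt (xs i) (xs j) := by
  simp only [rAt, Formula.realize_inf, realize_fAt, realize_ltAt]
  rw [gRel, and_assoc]; rfl

def eqAt {n : ℕ} (i j : Fin n) : L.Formula (↥A ⊕ Fin n) :=
  Term.equal (Term.var (Sum.inr i)) (Term.var (Sum.inr j))

lemma realize_eqAt {n : ℕ} {i j : Fin n} {xs : Fin n → M} :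
    (eqAt (A := A) (L := L) i j).Realize (pval xs) ↔ xs i = xs j := by
  simp [eqAt, Formula.realize_equal, Term.realize_var, pval]

end Aux

section Formulas

variable {A : Set M} (δ : L.Formula (↥A ⊕ Fin 1)) (lt : L.Formula (↥A ⊕ Fin 2))

/-- semantic: `s` is the immediate successor of `a` -/
def Succ (a s : M) : Prop :=
  gRel A δ lt a s ∧ ∀ z, gRel A δ lt a z → z = s ∨ gRel A δ lt s z

/-- semantic: `t` is the immediate predecessor of `a` -/
def Pred (a t : M) : Prop :=
  gRel A δ lt t a ∧ ∀ z, gRel A δ lt z a → z = t ∨ gRel A δ lt z t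

/-- vars: 0 = a, 1 = s : `s` is the immediate successor of `a` -/
noncomputable def succF : L.Formula (↥A ⊕ Fin 2) :=
  rAt δ lt 0 1 ⊓ allLast ((rAt δ lt 0 2).imp (eqAt 2 1 ⊔ rAt δ lt 1 2))

/-- vars: 0 = a, 1 = t : `t` is the immediate predecessor of `a` -/
noncomputable def predF : L.Formula (↥A ⊕ Fin 2) :=
  rAt δ lt 1 0 ⊓ allLast ((rAt δ lt 2 0).imp (eqAt 2 1 ⊔ rAt δ lt 2 1))

lemma snoc_two (a s z : M) : (Fin.snoc ![a, s] z : Fin 3 → M) = ![a, s, z] := by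
  funext j
  refine Fin.lastCases ?_ (fun k => ?_) j
  · simp [Fin.snoc_last]
  · rw [Fin.snoc_castSucc]; fin_cases k <;> rfl

lemma realize_succF {a s : M} :
    (succF δ lt).Realize (pval ![a, s]) ↔ Succ δ lt a s := by
  rw [succF, Formula.realize_inf, realize_rAt, realize_allLast, Succ]
  refine and_congr ?_ ?_
  · norm_num
  · refine forall_congr' fun z => ?_
    rw [snoc_two, Formula.realize_imp, Formula.realize_sup, realize_rAt, realize_rAt,
      realize_eqAt]
    norm_num
    exact Iff.rfl

lemma realize_predF {a t : M} :
    (predF δ lt).Realize (pval ![a, t]) ↔ Pred δ lt a t := by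
  rw [predF, Formula.realize_inf, realize_rAt, realize_allLast, Pred]
  refine and_congr ?_ ?_
  · norm_num
  · refine forall_congr' fun z => ?_
    rw [snoc_two, Formula.realize_imp, Formula.realize_sup, realize_rAt, realize_rAt,
      realize_eqAt]
    norm_num
    exact Iff.rfl

noncomputable def hasSuccF : L.Formula (↥A ⊕ Fin 1) := exLast (succF δ lt)

noncomputable def hasPredF : L.Formula (↥A ⊕ Fin 1) := exLast (predF δ lt)

noncomputable def nonMinF : L.Formula (↥A ⊕ Fin 1) := exLast (rAt δ lt 1 0)

lemma snoc_one (a z : M) : (Fin.snoc ![a] z : Fin 2 → M) = ![a, z] := by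
  funext j
  refine Fin.lastCases ?_ (fun k => ?_) j
  · simp [Fin.snoc_last]
  · rw [Fin.snoc_castSucc]; fin_cases k <;> rfl

lemma realize_hasSuccF {a : M} :
    (hasSuccF δ lt).Realize (pval ![a]) ↔ ∃ s, Succ δ lt a s := by
  rw [hasSuccF, realize_exLast]
  refine exists_congr fun s => ?_
  rw [snoc_one, realize_succF]

lemma realize_hasPredF {a : M} :
    (hasPredF δ lt).Realize (pval ![a]) ↔ ∃ t, Pred δ lt a t := by
  rw [hasPredF, realize_exLast]
  refine exists_congr fun t => ?_
  rw [snoc_one, realize_predF]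

lemma realize_nonMinF {a : M} :
    (nonMinF δ lt).Realize (pval ![a]) ↔ ∃ d, gRel A δ lt d a := by
  rw [nonMinF, realize_exLast]
  refine exists_congr fun d => ?_
  rw [snoc_one, realize_rAt]
  norm_num

/-- the defining formula of D₀; var 0 = x, quantified var 1 = e -/
noncomputable def delta0F : L.Formula (↥A ⊕ Fin 1) :=
  δ ⊓ allLast (((rAt δ lt 1 0) ⊔ (fAt δ 1 ⊓ eqAt 1 0)).imp
    (fAt (hasSuccF δ lt) 1 ⊓ ((fAt (nonMinF δ lt) 1).imp (fAt (hasPredF δ lt) 1))))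

lemma mem_delta0F {a : M} :
    a ∈ defSet A (delta0F δ lt) ↔ a ∈ defSet A δ ∧
      ∀ e, (gRel A δ lt e a ∨ (e ∈ defSet A δ ∧ e = a)) →
        (∃ s, Succ δ lt e s) ∧ ((∃ d, gRel A δ lt d e) → ∃ t, Pred δ lt e t) := by
  show (delta0F δ lt).Realize (pval ![a]) ↔ _
  rw [delta0F, Formula.realize_inf, realize_allLast]
  refine and_congr Iff.rfl (forall_congr' fun e => ?_)
  rw [snoc_one, Formula.realize_imp, Formula.realize_sup, realize_rAt, Formula.realize_inf,
    realize_fAt, realize_eqAt, Formula.realize_inf, realize_fAt, Formula.realize_imp,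
    realize_fAt, realize_fAt, realize_hasSuccF, realize_nonMinF, realize_hasPredF]
  norm_num [defSet]

/-- x has an immediate successor satisfying φ -/
noncomputable def chiS (φ : L.Formula (↥A ⊕ Fin 1)) : L.Formula (↥A ⊕ Fin 1) :=
  exLast (succF δ lt ⊓ fAt φ 1)

noncomputable def chiP (φ : L.Formula (↥A ⊕ Fin 1)) : L.Formula (↥A ⊕ Fin 1) :=
  exLast (predF δ lt ⊓ fAt φ 1)

lemma realize_chiS {φ : L.Formula (↥A ⊕ Fin 1)} {a : M} :
    (chiS δ lt φ).Realize (pval ![a]) ↔ ∃ s, Succ δ lt a s ∧ φ.Realize (pval ![s]) := by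
  rw [chiS, realize_exLast]
  refine exists_congr fun s => ?_
  rw [snoc_one, Formula.realize_inf, realize_succF, realize_fAt]
  norm_num

lemma realize_chiP {φ : L.Formula (↥A ⊕ Fin 1)} {a : M} :
    (chiP δ lt φ).Realize (pval ![a]) ↔ ∃ t, Pred δ lt a t ∧ φ.Realize (pval ![t]) := by
  rw [chiP, realize_exLast]
  refine exists_congr fun t => ?_
  rw [snoc_one, Formula.realize_inf, realize_predF, realize_fAt]
  norm_num

end Formulas

section Math

variable {A : Set M} {δ : L.Formula (↥A ⊕ Fin 1)} {lt : L.Formula (↥A ⊕ Fin 2)}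

local notation "D" => defSet A δ
local notation "r" => gRel A δ lt

lemma r_memL {a b : M} (h : gRel A δ lt a b) : a ∈ D := h.1
lemma r_memR {a b : M} (h : gRel A δ lt a b) : b ∈ D := h.2.1

section Lin

variable (hlin : IsLinearOn (gRel A δ lt) (defSet A δ))
include hlin

lemma r_irrefl {a : M} : ¬ gRel A δ lt a a := fun h => hlin.1 a h.1 h

lemma r_trans {a b c : M} (h1 : gRel A δ lt a b) (h2 : gRel A δ lt b c) :
    gRel A δ lt a c :=
  hlin.2.1 a h1.1 b h1.2.1 c h2.2.1 h1 h2

lemma r_total {a b : M} (ha : a ∈ D) (hb : b ∈ D) :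
    a = b ∨ gRel A δ lt a b ∨ gRel A δ lt b a :=
  hlin.2.2 a ha b hb

lemma r_asymm {a b : M} (h1 : gRel A δ lt a b) (h2 : gRel A δ lt b a) : False :=
  r_irrefl hlin (r_trans hlin h1 h2)

lemma succ_unique {a s s' : M} (h : Succ δ lt a s) (h' : Succ δ lt a s') : s = s' := by
  rcases h.2 s' h'.1 with h1 | h1
  · exact h1.symm
  · rcases h'.2 s h.1 with h2 | h2
    · exact h2
    · exact absurd h1 (fun h1 => r_asymm hlin h1 h2)

lemma pred_unique {a t t' : M} (h : Pred δ lt a t) (h' : Pred δ lt a t') : t = t' := by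
  rcases h.2 t' h'.1 with h1 | h1
  · exact h1.symm
  · rcases h'.2 t h.1 with h2 | h2
    · exact h2
    · exact absurd h1 (fun h1 => r_asymm hlin h1 h2)

lemma succ_inj {c c' b : M} (h : Succ δ lt c b) (h' : Succ δ lt c' b) : c = c' := by
  rcases r_total hlin (r_memL h.1) (r_memL h'.1) with h1 | h1 | h1
  · exact h1
  · rcases h.2 c' h1 with h2 | h2
    · exact absurd (h2 ▸ h'.1) (r_irrefl hlin)
    · exact absurd h2 (fun h2 => r_asymm hlin h2 h'.1)
  · rcases h'.2 c h1 with h2 | h2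
    · exact absurd (h2 ▸ h.1) (r_irrefl hlin)
    · exact absurd h2 (fun h2 => r_asymm hlin h2 h.1)

lemma pred_inj {c c' b : M} (h : Pred δ lt c b) (h' : Pred δ lt c' b) : c = c' := by
  rcases r_total hlin (r_memR h.1) (r_memR h'.1) with h1 | h1 | h1
  · exact h1
  · rcases h'.2 c h1 with h2 | h2
    · exact absurd (h2 ▸ h.1) (r_irrefl hlin)
    · exact absurd h2 (fun h2 => r_asymm hlin h2 h.1)
  · rcases h.2 c' h1 with h2 | h2
    · exact absurd (h2 ▸ h'.1) (r_irrefl hlin)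
    · exact absurd h2 (fun h2 => r_asymm hlin h2 h'.1)

lemma min_unique {a b : M} (ha : a ∈ D) (hb : b ∈ D)
    (hma : ∀ d, ¬ gRel A δ lt d a) (hmb : ∀ d, ¬ gRel A δ lt d b) : a = b := by
  rcases r_total hlin ha hb with h | h | h
  · exact h
  · exact absurd h (hmb a)
  · exact absurd h (hma b)

lemma finite_min {S : Set M} (hfin : S.Finite) (hS : S ⊆ D) (hne : S.Nonempty) :
    ∃ m ∈ S, ∀ x ∈ S, x = m ∨ gRel A δ lt m x := by
  revert hS hne
  refine Set.Finite.induction_on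
    (motive := fun S _ => S ⊆ D → S.Nonempty → ∃ m ∈ S, ∀ x ∈ S, x = m ∨ gRel A δ lt m x)
    S hfin (fun _ hne => absurd hne (by simp)) ?_
  rintro a s has hsfin ih hS hne
  · rcases s.eq_empty_or_nonempty with rfl | hsne
    · refine ⟨a, Set.mem_insert _ _, ?_⟩
      rintro x (rfl | hx)
      · exact Or.inl rfl
      · exact absurd hx (Set.notMem_empty x)
    · obtain ⟨m, hmS, hm⟩ := ih (fun x hx => hS (Set.mem_insert_of_mem _ hx)) hsne
      rcases r_total hlin (hS (Set.mem_insert _ _)) (hS (Set.mem_insert_of_mem _ hmS))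
        with h | h | h
      · refine ⟨m, Set.mem_insert_of_mem _ hmS, ?_⟩
        rintro x (rfl | hx)
        · exact Or.inl h
        · exact hm x hx
      · refine ⟨a, Set.mem_insert _ _, ?_⟩
        rintro x (rfl | hx)
        · exact Or.inl rfl
        · rcases hm x hx with rfl | hx'
          · exact Or.inr h
          · exact Or.inr (r_trans hlin h hx')
      · refine ⟨m, Set.mem_insert_of_mem _ hmS, ?_⟩
        rintro x (rfl | hx)
        · exact Or.inr h
        · exact hm x hx

lemma finite_max {S : Set M} (hfin : S.Finite) (hS : S ⊆ D) (hne : S.Nonempty) :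
    ∃ m ∈ S, ∀ x ∈ S, x = m ∨ gRel A δ lt x m := by
  revert hS hne
  refine Set.Finite.induction_on
    (motive := fun S _ => S ⊆ D → S.Nonempty → ∃ m ∈ S, ∀ x ∈ S, x = m ∨ gRel A δ lt x m)
    S hfin (fun _ hne => absurd hne (by simp)) ?_
  rintro a s has hsfin ih hS hne
  · rcases s.eq_empty_or_nonempty with rfl | hsne
    · refine ⟨a, Set.mem_insert _ _, ?_⟩
      rintro x (rfl | hx)
      · exact Or.inl rfl
      · exact absurd hx (Set.notMem_empty x)
    · obtain ⟨m, hmS, hm⟩ := ih (fun x hx => hS (Set.mem_insert_of_mem _ hx)) hsne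
      rcases r_total hlin (hS (Set.mem_insert _ _)) (hS (Set.mem_insert_of_mem _ hmS))
        with h | h | h
      · refine ⟨m, Set.mem_insert_of_mem _ hmS, ?_⟩
        rintro x (rfl | hx)
        · exact Or.inl h
        · exact hm x hx
      · refine ⟨m, Set.mem_insert_of_mem _ hmS, ?_⟩
        rintro x (rfl | hx)
        · exact Or.inr h
        · exact hm x hx
      · refine ⟨a, Set.mem_insert _ _, ?_⟩
        rintro x (rfl | hx)
        · exact Or.inl rfl
        · rcases hm x hx with rfl | hx'
          · exact Or.inr h
          · exact Or.inr (r_trans hlin hx' h)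

end Lin

section CLem

variable (hlin : IsLinearOn (gRel A δ lt) (defSet A δ)) {C : Set M}
  (hCD : C ⊆ defSet A δ)
  (hInit : ∀ c ∈ C, ∀ d ∈ defSet A δ, gRel A δ lt d c → d ∈ C)
  (hCinf : C.Infinite)
  (hom : ∀ c ∈ C, {c' ∈ C | gRel A δ lt c' c}.Finite)

include hlin hCD

include hCinf hom in
lemma C_unbounded : ∀ c ∈ C, ∃ c' ∈ C, gRel A δ lt c c' := by
  intro c hc
  obtain ⟨c', hc'C, hc'⟩ := hCinf.exists_notMem_finite ((hom c hc).union (finite_singleton c))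
  simp only [Set.mem_union, Set.mem_setOf_eq, Set.mem_singleton_iff, not_or] at hc'
  rcases r_total hlin (hCD hc) (hCD hc'C) with h | h | h
  · exact absurd h.symm hc'.2
  · exact ⟨c', hc'C, h⟩
  · exact absurd ⟨hc'C, h⟩ hc'.1

include hom in
lemma omega_min {S : Set M} (hS : S ⊆ C) (hne : S.Nonempty) :
    ∃ m ∈ S, ∀ x ∈ S, x = m ∨ gRel A δ lt m x := by
  obtain ⟨s₀, hs₀⟩ := hne
  have hFfin : {x ∈ S | x = s₀ ∨ gRel A δ lt x s₀}.Finite := by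
    refine Set.Finite.subset (((hom s₀ (hS hs₀)).union (finite_singleton s₀))) ?_
    rintro x ⟨hxS, rfl | hx⟩
    · exact Or.inr rfl
    · exact Or.inl ⟨hS hxS, hx⟩
  obtain ⟨m, hmF, hm⟩ := finite_min hlin hFfin
    (fun x hx => hCD (hS hx.1)) ⟨s₀, hs₀, Or.inl rfl⟩
  refine ⟨m, hmF.1, fun x hx => ?_⟩
  by_cases hxF : x = s₀ ∨ gRel A δ lt x s₀
  · exact hm x ⟨hx, hxF⟩
  · push_neg at hxF
    rcases r_total hlin (hCD (hS hx)) (hCD (hS hs₀)) with h | h | h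
    · exact absurd h hxF.1
    · exact absurd h hxF.2
    · rcases hmF.2 with rfl | hms₀
      · exact Or.inr h
      · exact Or.inr (r_trans hlin hms₀ h)

include hInit hCinf hom in
lemma succ_in_C : ∀ c ∈ C, ∃ s ∈ C, Succ δ lt c s := by
  intro c hc
  obtain ⟨c', hc'C, hcc'⟩ := C_unbounded hlin hCD hCinf hom c hc
  obtain ⟨m, hmS, hm⟩ := omega_min hlin hCD hom
    (S := {x ∈ C | gRel A δ lt c x}) (fun x hx => hx.1) ⟨c', hc'C, hcc'⟩
  refine ⟨m, hmS.1, hmS.2, fun z hz => ?_⟩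
  rcases r_total hlin (r_memR hz) (r_memR hmS.2) with h | h | h
  · exact Or.inl h
  · have hzC : z ∈ C := hInit m hmS.1 z (r_memR hz) h
    rcases hm z ⟨hzC, hz⟩ with rfl | h'
    · exact Or.inl rfl
    · exact absurd h (fun h => r_asymm hlin h h')
  · exact Or.inr h

include hInit hom in
lemma pred_in_C : ∀ c ∈ C, (∃ d, gRel A δ lt d c) → ∃ t ∈ C, Pred δ lt c t := by
  rintro c hc ⟨d, hd⟩
  have hdC : d ∈ C := hInit c hc d (r_memL hd) hd
  obtain ⟨t, htS, ht⟩ := finite_max hlin (hom c hc)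
    (fun x hx => hCD hx.1) ⟨d, hdC, hd⟩
  refine ⟨t, htS.1, htS.2, fun z hz => ?_⟩
  exact ht z ⟨hInit c hc z (r_memL hz) hz, hz⟩

end CLem

section D0Lem

variable (hlin : IsLinearOn (gRel A δ lt) (defSet A δ))

lemma D0_subset : defSet A (delta0F δ lt) ⊆ defSet A δ :=
  fun _ h => ((mem_delta0F δ lt).1 h).1

include hlin in
lemma D0_closed {a e : M} (ha : a ∈ defSet A (delta0F δ lt))
    (he : e ∈ defSet A δ) (h : gRel A δ lt e a ∨ e = a) :
    e ∈ defSet A (delta0F δ lt) := by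
  rcases h with h | rfl
  · rw [mem_delta0F] at ha ⊢
    refine ⟨he, fun e' he' => ?_⟩
    refine ha.2 e' ?_
    rcases he' with he' | ⟨_, rfl⟩
    · exact Or.inl (r_trans hlin he' h)
    · exact Or.inl h
  · exact ha

include hlin in
lemma D0_initial : IsInitialPart (gRel A δ lt) (defSet A δ) (defSet A (delta0F δ lt)) :=
  ⟨D0_subset, fun c hc d hd hdc => D0_closed hlin hc hd (Or.inl hdc)⟩

include hlin in
lemma D0_succ {a : M} (ha : a ∈ defSet A (delta0F δ lt)) : ∃ s, Succ δ lt a s :=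
  (((mem_delta0F δ lt).1 ha).2 a (Or.inr ⟨((mem_delta0F δ lt).1 ha).1, rfl⟩)).1

include hlin in
lemma D0_pred {a : M} (ha : a ∈ defSet A (delta0F δ lt)) (h : ∃ d, gRel A δ lt d a) :
    ∃ t, Pred δ lt a t :=
  (((mem_delta0F δ lt).1 ha).2 a (Or.inr ⟨((mem_delta0F δ lt).1 ha).1, rfl⟩)).2 h

include hlin in
lemma D0_discrete : IsDiscreteOn (gRel A δ lt) (defSet A (delta0F δ lt)) := by
  constructor
  · rintro a ha ⟨b, hb, hab⟩
    obtain ⟨s, hs⟩ := D0_succ hlin ha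
    have hsD0 : s ∈ defSet A (delta0F δ lt) := by
      rcases hs.2 b hab with rfl | h
      · exact hb
      · exact D0_closed hlin hb (r_memR hs.1) (Or.inl h)
    exact ⟨s, hsD0, hs.1, fun c _ hc => hs.2 c hc⟩
  · rintro a ha ⟨b, hb, hba⟩
    obtain ⟨t, ht⟩ := D0_pred hlin ha ⟨b, hba⟩
    have htD0 : t ∈ defSet A (delta0F δ lt) :=
      D0_closed hlin ha (r_memL ht.1) (Or.inl ht.1)
    exact ⟨t, htD0, ht.1, fun c _ hc => ht.2 c hc⟩

end D0Lem

section PLem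

variable (hlin : IsLinearOn (gRel A δ lt) (defSet A δ)) {C : Set M}
  (hCD : C ⊆ defSet A δ)
  (hInit : ∀ c ∈ C, ∀ d ∈ defSet A δ, gRel A δ lt d c → d ∈ C)
  (hCinf : C.Infinite)
  (hom : ∀ c ∈ C, {c' ∈ C | gRel A δ lt c' c}.Finite)
  {p : Set (L.Formula (↥A ⊕ Fin 1))}
  (hp7 : ∀ φ : L.Formula (↥A ⊕ Fin 1),
    φ ∈ p ↔ {c ∈ C | ¬φ.Realize (pval ![c])}.Finite)

include hlin hCD hInit hCinf hom hp7

lemma chiS_mem {φ : L.Formula (↥A ⊕ Fin 1)} (hφ : φ ∈ p) : chiS δ lt φ ∈ p := by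
  rw [hp7]
  refine Set.Finite.subset (Set.Finite.biUnion ((hp7 φ).1 hφ)
    (fun b _ => Set.Subsingleton.finite (s := {c | Succ δ lt c b})
      (fun x hx y hy => succ_inj hlin hx hy))) ?_
  rintro c ⟨hc, hnc⟩
  obtain ⟨s, hsC, hs⟩ := succ_in_C hlin hCD hInit hCinf hom c hc
  rw [Set.mem_iUnion₂]
  refine ⟨s, ⟨hsC, fun hφs => hnc ((realize_chiS δ lt).2 ⟨s, hs, hφs⟩)⟩, hs⟩

lemma chiP_mem {φ : L.Formula (↥A ⊕ Fin 1)} (hφ : φ ∈ p) : chiP δ lt φ ∈ p := by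
  rw [hp7]
  have hminfin : {c ∈ C | ∀ d, ¬ gRel A δ lt d c}.Finite := by
    refine Set.Subsingleton.finite (fun x hx y hy =>
      min_unique hlin (hCD hx.1) (hCD hy.1) hx.2 hy.2)
  refine Set.Finite.subset (hminfin.union (Set.Finite.biUnion ((hp7 φ).1 hφ)
    (fun b _ => Set.Subsingleton.finite (s := {c | Pred δ lt c b})
      (fun x hx y hy => pred_inj hlin hx hy)))) ?_
  rintro c ⟨hc, hnc⟩
  by_cases hd : ∃ d, gRel A δ lt d c
  · obtain ⟨t, htC, ht⟩ := pred_in_C hlin hCD hInit hom c hc hd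
    refine Or.inr ?_
    rw [Set.mem_iUnion₂]
    refine ⟨t, ⟨htC, fun hφt => hnc ((realize_chiP δ lt).2 ⟨t, ht, hφt⟩)⟩, ht⟩
  · push_neg at hd
    exact Or.inl ⟨hc, hd⟩

lemma C_subset_D0 : C ⊆ defSet A (delta0F δ lt) := by
  intro c hc
  rw [mem_delta0F]
  refine ⟨hCD hc, fun e he => ?_⟩
  have heC : e ∈ C := by
    rcases he with he | ⟨_, rfl⟩
    · exact hInit c hc e (r_memL he) he
    · exact hc
  constructor
  · obtain ⟨s, _, hs⟩ := succ_in_C hlin hCD hInit hCinf hom e heC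
    exact ⟨s, hs⟩
  · intro hd
    obtain ⟨t, _, ht⟩ := pred_in_C hlin hCD hInit hom e heC hd
    exact ⟨t, ht⟩

lemma delta0_mem : delta0F δ lt ∈ p := by
  rw [hp7]
  refine Set.Finite.subset Set.finite_empty ?_
  rintro c ⟨hc, hnc⟩
  exact hnc (C_subset_D0 hlin hCD hInit hCinf hom hp7 hc)

lemma typeSet_subset_D0 : typeSet A p ⊆ defSet A (delta0F δ lt) :=
  fun _ ha => ha _ (delta0_mem hlin hCD hInit hCinf hom hp7)

lemma typeSet_discrete : IsDiscreteOn (gRel A δ lt) (typeSet A p) := by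
  constructor
  · rintro a ha ⟨b, hb, hab⟩
    obtain ⟨s, hs⟩ := D0_succ hlin (typeSet_subset_D0 hlin hCD hInit hCinf hom hp7 ha)
    have hsq : s ∈ typeSet A p := by
      intro φ hφ
      obtain ⟨s', hs', hφs'⟩ :=
        (realize_chiS δ lt).1 (ha _ (chiS_mem hlin hCD hInit hCinf hom hp7 hφ))
      rwa [succ_unique hlin hs' hs] at hφs'
    exact ⟨s, hsq, hs.1, fun c _ hc => hs.2 c hc⟩
  · rintro a ha ⟨b, hb, hba⟩
    obtain ⟨t, ht⟩ := D0_pred hlin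
      (typeSet_subset_D0 hlin hCD hInit hCinf hom hp7 ha) ⟨b, hba⟩
    have htq : t ∈ typeSet A p := by
      intro φ hφ
      obtain ⟨t', ht', hφt'⟩ :=
        (realize_chiP δ lt).1 (ha _ (chiP_mem hlin hCD hInit hCinf hom hp7 hφ))
      rwa [pred_unique hlin ht' ht] at hφt'
    exact ⟨t, htq, ht.1, fun c _ hc => ht.2 c hc⟩

end PLem

end Math


/-- Lemma 2(b). If `p ∈ S₁(A)` is simple, witnessed by `C` and
`(D, <)`, then there is an `A`-definable, discretely ordered initial part
`D₀ ⊆ D` containing `P(M) = C ∪ p(M)`; in particular `(p(M), <)` is discrete. -/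
theorem statement6 (L : FirstOrder.Language.{u, v}) (hL : L.card ≤ ℵ₀)
    (T : L.Theory) (hT : T.IsComplete)
    (M : Type w) [L.Structure M] (hMT : M ⊨ T) (hMinf : Infinite M)
    (hsat : IsAleph1Saturated L M)
    (A : Set M) (hA : A.Countable)
    (p : Set (L.Formula (↥A ⊕ Fin 1))) (C : Set M)
    (δ : L.Formula (↥A ⊕ Fin 1)) (lt : L.Formula (↥A ⊕ Fin 2))
    (hp : IsSimpleWitness A p C δ lt) :
    (∃ δ₀ : L.Formula (↥A ⊕ Fin 1),
      defSet A δ₀ ⊆ defSet A δ ∧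
      IsInitialPart (gRel A δ lt) (defSet A δ) (defSet A δ₀) ∧
      IsDiscreteOn (gRel A δ lt) (defSet A δ₀) ∧
      C ∪ typeSet A p ⊆ defSet A δ₀) ∧
    IsDiscreteOn (gRel A δ lt) (typeSet A p) := by
  obtain ⟨hcomp, hCinf, hCdcl, hlin, ⟨hCD, hInit⟩, ⟨hCinf', hom⟩, hp7⟩ := hp
  constructor
  · refine ⟨delta0F δ lt, D0_subset, D0_initial hlin, D0_discrete hlin, ?_⟩
    rintro a (ha | ha)
    · exact C_subset_D0 hlin hCD hInit hCinf' hom hp7 ha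
    · exact typeSet_subset_D0 hlin hCD hInit hCinf' hom hp7 ha
  · exact typeSet_discrete hlin hCD hInit hCinf' hom hp7

end PaperDef
end

section
/- Let T be a complete first-order theory with infinite models in a countable language L, let M be an ℵ₁-saturated model of T, let A ⊆ M be countable, and let p ∈ S₁(A) be a simple type, witnessed by C ⊆ dcl(A) and the A-definable linear order (D,<). Then every nonempty subset of P(M) = C ∪ p(M) of the form P(M) ∩ θ(M,b̄), where θ(x,ȳ) is an L(A)-formula and b̄ is a tuple of parameters from M, has a <-minimum. -/
open FirstOrder FirstOrder.Language Set Cardinal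

universe u v w

namespace PaperDef

variable {L : FirstOrder.Language.{u, v}}

variable {M : Type w} [L.Structure M]

section Statement7Helpers

variable {M : Type w} [L.Structure M] {A : Set M}

lemma realize_atf {ν : Type*} {n : ℕ} (φ : L.Formula (↥A ⊕ Fin n)) (jA : ↥A → ν)
    (g : Fin n → ν) {V : ν → M} (h : ∀ a, V (jA a) = a.1) :
    (φ.relabel (Sum.elim jA g)).Realize V ↔ φ.Realize (pval (V ∘ g)) := by
  rw [Formula.realize_relabel]
  have hv : V ∘ Sum.elim jA g = pval (V ∘ g) := by
    funext x
    cases x with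
    | inl a => simpa [pval] using h a
    | inr k => simp [pval]
  rw [hv]

lemma comp_vec1 {ν : Type*} (V : ν → M) (i : ν) : V ∘ ![i] = ![V i] := by
  funext k
  fin_cases k <;> simp

lemma comp_vec2 {ν : Type*} (V : ν → M) (i j : ν) : V ∘ ![i, j] = ![V i, V j] := by
  funext k
  fin_cases k <;> simp

lemma comp_append {ν : Type*} {m : ℕ} (V : ν → M) (i : ν) (ys : Fin m → ν) :
    V ∘ Fin.append ![i] ys = Fin.append ![V i] (V ∘ ys) := by
  funext k
  cases k using Fin.addCases with
  | left l =>
      simp only [Function.comp_apply, Fin.append_left]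
      fin_cases l <;> simp
  | right l => simp [Fin.append_right]

variable {M : Type w} [L.Structure M] {A : Set M}

variable (δ : L.Formula (↥A ⊕ Fin 1)) (lt : L.Formula (↥A ⊕ Fin 2)) {m : ℕ}
  (θ : L.Formula (↥A ⊕ Fin (1 + m)))

/-- Semantic: `θ(y, bs)` holds. -/
def thSem (bs : Fin m → M) (y : M) : Prop := θ.Realize (pval (Fin.append ![y] bs))

/-- Semantic: the upward closure (within `D`) of `{y ∈ D | θ(y, bs)}`. -/
def USet (bs : Fin m → M) : Set M :=
  {z | z ∈ defSet A δ ∧ ∃ y, y ∈ defSet A δ ∧ thSem θ bs y ∧ (y = z ∨ defRel A lt y z)}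

/-- Semantic: `x` is the minimum of `USet bs`. -/
def isMinU (bs : Fin m → M) (x : M) : Prop :=
  x ∈ USet δ lt θ bs ∧ ∀ u ∈ USet δ lt θ bs, x = u ∨ defRel A lt x u

/-- Matrix of the inner existential of the formula defining `USet`. -/
noncomputable def UfIn {ν : Type*} (jA : ↥A → ν) (i : ν) (ys : Fin m → ν) :
    L.Formula (ν ⊕ Fin 1) :=
  (δ.relabel (Sum.elim (Sum.inl ∘ jA) ![Sum.inr 0])) ⊓
    ((θ.relabel (Sum.elim (Sum.inl ∘ jA) (Fin.append ![Sum.inr 0] (Sum.inl ∘ ys)))) ⊓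
      (Term.equal (Term.var (Sum.inr 0)) (Term.var (Sum.inl i)) ⊔
        lt.relabel (Sum.elim (Sum.inl ∘ jA) ![Sum.inr 0, Sum.inl i])))

/-- The formula defining `USet` (with `i` the main variable and `ys` the parameter slots). -/
noncomputable def Uf {ν : Type*} (jA : ↥A → ν) (i : ν) (ys : Fin m → ν) : L.Formula ν :=
  (δ.relabel (Sum.elim jA ![i])) ⊓ Formula.iExs _ (UfIn δ lt θ jA i ys)

lemma realize_UfIn {ν : Type*} (jA : ↥A → ν) (i : ν) (ys : Fin m → ν) {V : ν → M}
    (h : ∀ a, V (jA a) = a.1) (w : Fin 1 → M) :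
    (UfIn δ lt θ jA i ys).Realize (Sum.elim V w) ↔
      (w 0 ∈ defSet A δ ∧ thSem θ (V ∘ ys) (w 0) ∧
        (w 0 = V i ∨ defRel A lt (w 0) (V i))) := by
  have h' : ∀ a : ↥A, (Sum.elim V w) ((Sum.inl ∘ jA) a) = a.1 := fun a => by simpa using h a
  have hys : (Sum.elim V w) ∘ (Sum.inl ∘ ys) = V ∘ ys := by funext j; simp
  rw [UfIn, Formula.realize_inf, Formula.realize_inf, realize_atf δ _ _ h',
    realize_atf θ _ _ h', Formula.realize_sup, realize_atf lt _ _ h',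
    Formula.realize_equal, comp_vec1, comp_vec2, comp_append, hys]
  simp only [Sum.elim_inl, Sum.elim_inr, Term.realize_var]
  rfl

lemma realize_Uf {ν : Type*} (jA : ↥A → ν) (i : ν) (ys : Fin m → ν) {V : ν → M}
    (h : ∀ a, V (jA a) = a.1) :
    (Uf δ lt θ jA i ys).Realize V ↔ V i ∈ USet δ lt θ (V ∘ ys) := by
  rw [Uf, Formula.realize_inf, realize_atf δ jA ![i] h, comp_vec1, Formula.realize_iExs]
  apply and_congr Iff.rfl
  constructor
  · rintro ⟨w, hw⟩
    exact ⟨w 0, (realize_UfIn δ lt θ jA i ys h w).mp hw⟩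
  · rintro ⟨y, hy⟩
    refine ⟨![y], (realize_UfIn δ lt θ jA i ys h ![y]).mpr ?_⟩
    simpa using hy

/-- Matrix of the universal part of the formula saying `w` is the minimum of `USet`. -/
noncomputable def MfIn {ν : Type*} (jA : ↥A → ν) (w : ν) (ys : Fin m → ν) :
    L.Formula (ν ⊕ Fin 1) :=
  (Uf δ lt θ (Sum.inl ∘ jA) (Sum.inr 0) (Sum.inl ∘ ys)).imp
    (Term.equal (Term.var (Sum.inl w)) (Term.var (Sum.inr 0)) ⊔
      lt.relabel (Sum.elim (Sum.inl ∘ jA) ![Sum.inl w, Sum.inr 0]))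

/-- The formula saying `w` is the minimum of `USet`. -/
noncomputable def Mf {ν : Type*} (jA : ↥A → ν) (w : ν) (ys : Fin m → ν) : L.Formula ν :=
  Uf δ lt θ jA w ys ⊓ Formula.iAlls _ (MfIn δ lt θ jA w ys)

lemma realize_MfIn {ν : Type*} (jA : ↥A → ν) (i : ν) (ys : Fin m → ν) {V : ν → M}
    (h : ∀ a, V (jA a) = a.1) (w : Fin 1 → M) :
    (MfIn δ lt θ jA i ys).Realize (Sum.elim V w) ↔
      (w 0 ∈ USet δ lt θ (V ∘ ys) → (V i = w 0 ∨ defRel A lt (V i) (w 0))) := by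
  have h' : ∀ a : ↥A, (Sum.elim V w) ((Sum.inl ∘ jA) a) = a.1 := fun a => by simpa using h a
  have hys : (Sum.elim V w) ∘ (Sum.inl ∘ ys) = V ∘ ys := by funext j; simp
  rw [MfIn, Formula.realize_imp, realize_Uf δ lt θ _ _ _ h', hys, Formula.realize_sup,
    realize_atf lt _ _ h', Formula.realize_equal, comp_vec2]
  simp only [Sum.elim_inl, Sum.elim_inr, Term.realize_var]
  rfl

lemma realize_Mf {ν : Type*} (jA : ↥A → ν) (i : ν) (ys : Fin m → ν) {V : ν → M}
    (h : ∀ a, V (jA a) = a.1) :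
    (Mf δ lt θ jA i ys).Realize V ↔ isMinU δ lt θ (V ∘ ys) (V i) := by
  rw [Mf, Formula.realize_inf, realize_Uf δ lt θ jA i ys h, Formula.realize_iAlls]
  apply and_congr Iff.rfl
  constructor
  · intro hw u hu
    have := (realize_MfIn δ lt θ jA i ys h ![u]).mp (hw ![u])
    simpa using this hu
  · intro hw w
    exact (realize_MfIn δ lt θ jA i ys h w).mpr (fun hu => hw (w 0) hu)

/-- The embedding of `A`-indices into the context `(↥A ⊕ Fin 1) ⊕ Fin m`. -/
def jβ : ↥A → (↥A ⊕ Fin 1) ⊕ Fin m := Sum.inl ∘ Sum.inl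

/-- The formula `ρ(x)`: there are parameters `ys` such that `x` lies in the
(upward-closed) set `USet ys` and `USet ys` has no minimum. -/
noncomputable def rhoF : L.Formula (↥A ⊕ Fin 1) :=
  Formula.iExs _
    (Uf δ lt θ jβ (Sum.inl (Sum.inr 0)) Sum.inr ⊓
      (Formula.iExs _
        (Mf δ lt θ (Sum.inl ∘ jβ) (Sum.inr (0 : Fin 1)) (Sum.inl ∘ Sum.inr))).not)

lemma realize_rho (z : M) :
    (rhoF δ lt θ).Realize (pval ![z]) ↔
      ∃ bs : Fin m → M, z ∈ USet δ lt θ bs ∧ ¬∃ x, isMinU δ lt θ bs x := by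
  rw [rhoF, Formula.realize_iExs]
  apply exists_congr
  intro bs
  have h : ∀ a : ↥A, (Sum.elim (pval ![z]) bs) (jβ a) = a.1 := fun a => by
    simp [jβ, pval]
  have h' : ∀ a : ↥A, (Sum.elim (Sum.elim (pval ![z]) bs) (·)) ((Sum.inl ∘ jβ) a) = a.1 :=
    fun a => by simp [jβ, pval]
  rw [Formula.realize_inf, realize_Uf δ lt θ jβ _ _ h, Formula.realize_not,
    Formula.realize_iExs]
  have hx : Sum.elim (pval ![z]) bs ((Sum.inl (Sum.inr 0) : (↥A ⊕ Fin 1) ⊕ Fin m)) = z := by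
    simp [pval]
  have hys : (Sum.elim (pval ![z]) bs) ∘ (Sum.inr : Fin m → (↥A ⊕ Fin 1) ⊕ Fin m) = bs :=
    rfl
  rw [hx, hys]
  apply and_congr Iff.rfl
  apply not_congr
  constructor
  · rintro ⟨w, hw⟩
    have h2 : ∀ a : ↥A,
        (Sum.elim (Sum.elim (pval ![z]) bs) w) ((Sum.inl ∘ jβ) a) = a.1 := fun a => by
      simp [jβ, pval]
    have := (realize_Mf δ lt θ (Sum.inl ∘ jβ) (Sum.inr 0) (Sum.inl ∘ Sum.inr) h2).mp hw
    refine ⟨w 0, ?_⟩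
    have hys2 : (Sum.elim (Sum.elim (pval ![z]) bs) w) ∘ ((Sum.inl ∘ Sum.inr) : Fin m → ((↥A ⊕ Fin 1) ⊕ Fin m) ⊕ Fin 1) = bs := by
      funext j; simp
    rw [hys2] at this
    exact this
  · rintro ⟨x, hx'⟩
    refine ⟨![x], ?_⟩
    have h2 : ∀ a : ↥A,
        (Sum.elim (Sum.elim (pval ![z]) bs) ![x]) ((Sum.inl ∘ jβ) a) = a.1 := fun a => by
      simp [jβ, pval]
    rw [realize_Mf δ lt θ (Sum.inl ∘ jβ) (Sum.inr 0) (Sum.inl ∘ Sum.inr) h2]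
    have hys2 : (Sum.elim (Sum.elim (pval ![z]) bs) ![x]) ∘ ((Sum.inl ∘ Sum.inr) : Fin m → ((↥A ⊕ Fin 1) ⊕ Fin m) ⊕ Fin 1) = bs := by
      funext j; simp
    rw [hys2]
    simpa using hx'

/-- The formula `σ(x)`: there are parameters `ys` such that `x ∈ USet ys`, the
`A`-definable element picked out by `φd` is in `D` but not in `USet ys`, and
`USet ys` has a minimum failing `χ`. -/
noncomputable def sigF (χ φd : L.Formula (↥A ⊕ Fin 1)) : L.Formula (↥A ⊕ Fin 1) :=
  Formula.iExs _
    (Uf δ lt θ jβ (Sum.inl (Sum.inr 0)) Sum.inr ⊓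
      ((Formula.iExs _
        ((φd.relabel (Sum.elim (Sum.inl ∘ jβ) ![Sum.inr (0 : Fin 1)])) ⊓
          ((δ.relabel (Sum.elim (Sum.inl ∘ jβ) ![Sum.inr (0 : Fin 1)])) ⊓
            (Uf δ lt θ (Sum.inl ∘ jβ) (Sum.inr (0 : Fin 1)) (Sum.inl ∘ Sum.inr)).not))) ⊓
      (Formula.iExs _
        (Mf δ lt θ (Sum.inl ∘ jβ) (Sum.inr (0 : Fin 1)) (Sum.inl ∘ Sum.inr) ⊓
          (χ.relabel (Sum.elim (Sum.inl ∘ jβ) ![Sum.inr (0 : Fin 1)])).not))))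

lemma realize_sig (χ φd : L.Formula (↥A ⊕ Fin 1)) (z : M) :
    (sigF δ lt θ χ φd).Realize (pval ![z]) ↔
      ∃ bs : Fin m → M, z ∈ USet δ lt θ bs ∧
        (∃ d', φd.Realize (pval ![d']) ∧ d' ∈ defSet A δ ∧ d' ∉ USet δ lt θ bs) ∧
        (∃ x, isMinU δ lt θ bs x ∧ ¬χ.Realize (pval ![x])) := by
  rw [sigF, Formula.realize_iExs]
  apply exists_congr
  intro bs
  have h : ∀ a : ↥A, (Sum.elim (pval ![z]) bs) (jβ a) = a.1 := fun a => by
    simp [jβ, pval]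
  rw [Formula.realize_inf, Formula.realize_inf, realize_Uf δ lt θ jβ _ _ h,
    Formula.realize_iExs, Formula.realize_iExs]
  have hx : Sum.elim (pval ![z]) bs ((Sum.inl (Sum.inr 0) : (↥A ⊕ Fin 1) ⊕ Fin m)) = z := by
    simp [pval]
  have hys : (Sum.elim (pval ![z]) bs) ∘ (Sum.inr : Fin m → (↥A ⊕ Fin 1) ⊕ Fin m) = bs :=
    rfl
  rw [hx, hys]
  apply and_congr Iff.rfl
  apply and_congr
  · constructor
    · rintro ⟨w, hw⟩
      have h2 : ∀ a : ↥A,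
          (Sum.elim (Sum.elim (pval ![z]) bs) w) ((Sum.inl ∘ jβ) a) = a.1 := fun a => by
        simp [jβ, pval]
      have hw' := hw
      rw [Formula.realize_inf, Formula.realize_inf, realize_atf φd _ _ h2,
        realize_atf δ _ _ h2, Formula.realize_not,
        realize_Uf δ lt θ (Sum.inl ∘ jβ) (Sum.inr 0) (Sum.inl ∘ Sum.inr) h2,
        comp_vec1] at hw'
      have hys2 : (Sum.elim (Sum.elim (pval ![z]) bs) w) ∘ ((Sum.inl ∘ Sum.inr) : Fin m → ((↥A ⊕ Fin 1) ⊕ Fin m) ⊕ Fin 1) = bs := by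
        funext j; simp
      rw [hys2] at hw'
      exact ⟨w 0, by simpa [defSet] using hw'⟩
    · rintro ⟨d', hd1, hd2, hd3⟩
      refine ⟨![d'], ?_⟩
      have h2 : ∀ a : ↥A,
          (Sum.elim (Sum.elim (pval ![z]) bs) ![d']) ((Sum.inl ∘ jβ) a) = a.1 := fun a => by
        simp [jβ, pval]
      rw [Formula.realize_inf, Formula.realize_inf, realize_atf φd _ _ h2,
        realize_atf δ _ _ h2, Formula.realize_not,
        realize_Uf δ lt θ (Sum.inl ∘ jβ) (Sum.inr 0) (Sum.inl ∘ Sum.inr) h2,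
        comp_vec1]
      have hys2 : (Sum.elim (Sum.elim (pval ![z]) bs) ![d']) ∘ ((Sum.inl ∘ Sum.inr) : Fin m → ((↥A ⊕ Fin 1) ⊕ Fin m) ⊕ Fin 1) = bs := by
        funext j; simp
      rw [hys2]
      simpa using ⟨hd1, hd2, hd3⟩
  · constructor
    · rintro ⟨w, hw⟩
      have h2 : ∀ a : ↥A,
          (Sum.elim (Sum.elim (pval ![z]) bs) w) ((Sum.inl ∘ jβ) a) = a.1 := fun a => by
        simp [jβ, pval]
      have hw' := hw
      rw [Formula.realize_inf,
        realize_Mf δ lt θ (Sum.inl ∘ jβ) (Sum.inr 0) (Sum.inl ∘ Sum.inr) h2,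
        Formula.realize_not, realize_atf χ _ _ h2, comp_vec1] at hw'
      have hys2 : (Sum.elim (Sum.elim (pval ![z]) bs) w) ∘ ((Sum.inl ∘ Sum.inr) : Fin m → ((↥A ⊕ Fin 1) ⊕ Fin m) ⊕ Fin 1) = bs := by
        funext j; simp
      rw [hys2] at hw'
      exact ⟨w 0, by simpa using hw'⟩
    · rintro ⟨x, hx1, hx2⟩
      refine ⟨![x], ?_⟩
      have h2 : ∀ a : ↥A,
          (Sum.elim (Sum.elim (pval ![z]) bs) ![x]) ((Sum.inl ∘ jβ) a) = a.1 := fun a => by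
        simp [jβ, pval]
      rw [Formula.realize_inf,
        realize_Mf δ lt θ (Sum.inl ∘ jβ) (Sum.inr 0) (Sum.inl ∘ Sum.inr) h2,
        Formula.realize_not, realize_atf χ _ _ h2, comp_vec1]
      have hys2 : (Sum.elim (Sum.elim (pval ![z]) bs) ![x]) ∘ ((Sum.inl ∘ Sum.inr) : Fin m → ((↥A ⊕ Fin 1) ⊕ Fin m) ⊕ Fin 1) = bs := by
        funext j; simp
      rw [hys2]
      simpa using ⟨hx1, hx2⟩

end Statement7Helpers

/-- Lemma 2(c). If `p ∈ S₁(A)` is simple, witnessed by `C` and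
`(D, <)`, then every nonempty relatively `M`-definable subset of `P(M) = C ∪ p(M)`
has a `<`-minimum. -/
theorem statement7 (L : FirstOrder.Language.{u, v}) (hL : L.card ≤ ℵ₀)
    (T : L.Theory) (hT : T.IsComplete)
    (M : Type w) [L.Structure M] (hMT : M ⊨ T) (hMinf : Infinite M)
    (hsat : IsAleph1Saturated L M)
    (A : Set M) (hA : A.Countable)
    (p : Set (L.Formula (↥A ⊕ Fin 1))) (C : Set M)
    (δ : L.Formula (↥A ⊕ Fin 1)) (lt : L.Formula (↥A ⊕ Fin 2))
    (hp : IsSimpleWitness A p C δ lt) :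
    ∀ (m : ℕ) (θ : L.Formula (↥A ⊕ Fin (1 + m))) (bs : Fin m → M),
      ∀ X : Set M,
        X = {a ∈ C ∪ typeSet A p | θ.Realize (pval (Fin.append ![a] bs))} →
        X.Nonempty →
        ∃ a ∈ X, ∀ b ∈ X, a = b ∨ gRel A δ lt a b := by
  classical
  obtain ⟨-, hCinf, hCdcl, ⟨hirr, htrans, htot⟩, ⟨hCD, hdown⟩, ⟨-, hfin⟩, hiff⟩ := hp
  intro m θ bs X hX hXne
  set D : Set M := defSet A δ with hD
  set r : M → M → Prop := gRel A δ lt with hr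
  -- δ belongs to p, hence realizations of p lie in D
  have hδp : δ ∈ p := by
    refine (hiff δ).mpr (Set.finite_empty.subset ?_)
    rintro c ⟨hc, hnd⟩
    exact hnd (hCD hc)
  have htypeD : ∀ e ∈ typeSet A p, e ∈ D := fun e he => he δ hδp
  -- no realization of p lies in C
  have hPC : ∀ e ∈ typeSet A p, e ∉ C := by
    intro e he heC
    obtain ⟨φe, hφe, huniq⟩ := hCdcl heC
    have hnot : Formula.not φe ∈ p := by
      refine (hiff _).mpr ((Set.finite_singleton e).subset ?_)
      rintro c ⟨hc, hnc⟩
      rw [Formula.realize_not, not_not] at hnc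
      exact huniq c hnc
    have := he _ hnot
    rw [Formula.realize_not] at this
    exact this hφe
  -- every element of C is below every element of D outside C
  have hCe : ∀ c ∈ C, ∀ e ∈ D, e ∉ C → r c e := by
    intro c hc e heD heC
    rcases htot c (hCD hc) e heD with h | h | h
    · exact absurd (h ▸ hc) heC
    · exact h
    · exact absurd (hdown c hc e heD h) heC
  have hCtype : ∀ c ∈ C, ∀ e ∈ typeSet A p, r c e := fun c hc e he =>
    hCe c hc e (htypeD e he) (hPC e he)
  -- every finite nonempty subset of D has an r-minimum
  have hminfin : ∀ s : Set M, s.Finite → s ⊆ D → s.Nonempty →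
      ∃ x ∈ s, ∀ b ∈ s, x = b ∨ r x b := by
    intro s hs
    refine Set.Finite.induction_on s hs
      (motive := fun s _ => s ⊆ D → s.Nonempty → ∃ x ∈ s, ∀ b ∈ s, x = b ∨ r x b) (fun _ h => absurd h (by simp)) ?_
    intro x t hxt htfin IH hsub hne
    rcases t.eq_empty_or_nonempty with rfl | htne
    · refine ⟨x, Set.mem_insert x ∅, ?_⟩
      intro b hb
      rcases Set.mem_insert_iff.mp hb with rfl | hb
      · exact Or.inl rfl
      · exact absurd hb (Set.notMem_empty b)
    · obtain ⟨y, hyt, hymin⟩ := IH (fun z hz => hsub (Set.mem_insert_of_mem x hz)) htne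
      have hxD : x ∈ D := hsub (Set.mem_insert x t)
      have hyD : y ∈ D := hsub (Set.mem_insert_of_mem x hyt)
      rcases htot x hxD y hyD with h | h | h
      · refine ⟨y, Set.mem_insert_of_mem x hyt, ?_⟩
        intro b hb
        rcases Set.mem_insert_iff.mp hb with rfl | hb
        · exact Or.inl h.symm
        · exact hymin b hb
      · refine ⟨x, Set.mem_insert x t, ?_⟩
        intro b hb
        rcases Set.mem_insert_iff.mp hb with rfl | hb
        · exact Or.inl rfl
        · rcases hymin b hb with rfl | hyb
          · exact Or.inr h
          · exact Or.inr (htrans x hxD y hyD b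
              (hsub (Set.mem_insert_of_mem x hb)) h hyb)
      · refine ⟨y, Set.mem_insert_of_mem x hyt, ?_⟩
        intro b hb
        rcases Set.mem_insert_iff.mp hb with rfl | hb
        · exact Or.inr h
        · exact hymin b hb
  by_cases hXC : ∃ c, c ∈ X ∧ c ∈ C
  · -- Case 1: X meets C; take the minimum of the (finite) initial part of X ∩ C
    obtain ⟨c₀, hc₀X, hc₀C⟩ := hXC
    set G : Set M := {c | (c ∈ X ∧ c ∈ C) ∧ (c = c₀ ∨ r c c₀)} with hG
    have hGfin : G.Finite := by
      refine ((hfin c₀ hc₀C).insert c₀).subset ?_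
      rintro c ⟨⟨-, hcC⟩, rfl | hc⟩
      · exact Set.mem_insert _ _
      · exact Set.mem_insert_of_mem c₀ ⟨hcC, hc⟩
    have hGsub : G ⊆ D := fun c hc => hCD hc.1.2
    obtain ⟨w, hwG, hwmin⟩ := hminfin G hGfin hGsub ⟨c₀, ⟨hc₀X, hc₀C⟩, Or.inl rfl⟩
    refine ⟨w, hwG.1.1, ?_⟩
    intro b hbX
    have hb' := hbX
    rw [hX] at hb'
    obtain ⟨hb1, -⟩ := hb'
    have hwC : w ∈ C := hwG.1.2
    by_cases hbC : b ∈ C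
    · rcases htot w (hCD hwC) b (hCD hbC) with h | h | h
      · exact Or.inl h
      · exact Or.inr h
      · -- b < w : then b ∈ G, contradicting minimality of w
        have hbc₀ : b = c₀ ∨ r b c₀ := by
          rcases hwG.2 with rfl | hwc₀
          · exact Or.inr h
          · exact Or.inr (htrans b (hCD hbC) w (hCD hwC) c₀ (hCD hc₀C) h hwc₀)
        have hbG : b ∈ G := ⟨⟨hbX, hbC⟩, hbc₀⟩
        rcases hwmin b hbG with rfl | hwb
        · exact absurd h (hirr _ (hCD hbC))
        · exact absurd (htrans b (hCD hbC) w (hCD hwC) b (hCD hbC) h hwb)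
            (hirr b (hCD hbC))
    · have hbT : b ∈ typeSet A p := by
        rcases hb1 with hb1 | hb1
        · exact absurd hb1 hbC
        · exact hb1
      exact Or.inr (hCtype w hwC b hbT)
  · -- Case 2: X ∩ C = ∅
    push_neg at hXC
    obtain ⟨a, haX⟩ := hXne
    have haX' := haX
    rw [hX] at haX'
    obtain ⟨ha1, haθ⟩ := haX'
    have haT : a ∈ typeSet A p := by
      rcases ha1 with h | h
      · exact absurd h (hXC a haX)
      · exact h
    have hθC : ∀ c ∈ C, ¬thSem θ bs c := by
      intro c hc hth
      exact hXC c (hX ▸ ⟨Set.mem_union_left _ hc, hth⟩) hc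
    -- facts about USet
    have hUD : ∀ bs' : Fin m → M, USet δ lt θ bs' ⊆ D := fun _ z hz => hz.1
    have hmemU : ∀ (bs' : Fin m → M) (z : M), z ∈ D → thSem θ bs' z →
        z ∈ USet δ lt θ bs' := fun bs' z hzD hth => ⟨hzD, z, hzD, hth, Or.inl rfl⟩
    have hUup : ∀ (bs' : Fin m → M), ∀ u ∈ USet δ lt θ bs', ∀ u' ∈ D,
        defRel A lt u u' → u' ∈ USet δ lt θ bs' := by
      rintro bs' u ⟨huD, y, hyD, hθy, hyu⟩ u' hu'D hrel
      refine ⟨hu'D, y, hyD, hθy, Or.inr ?_⟩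
      rcases hyu with rfl | hyu
      · exact hrel
      · exact (htrans y hyD u huD u' hu'D ⟨hyD, huD, hyu⟩ ⟨huD, hu'D, hrel⟩).2.2
    have hUCempty : ∀ c ∈ C, c ∉ USet δ lt θ bs := by
      rintro c hc ⟨hcD, y, hyD, hθy, hyc⟩
      have hyC : y ∈ C := by
        rcases hyc with rfl | hyc
        · exact hc
        · exact hdown c hc y hyD ⟨hyD, hcD, hyc⟩
      exact hθC y hyC hθy
    have hXU : ∀ x ∈ X, x ∈ USet δ lt θ bs := by
      intro x hx
      have hx' := hx
      rw [hX] at hx'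
      obtain ⟨hx1, hx2⟩ := hx'
      have hxD : x ∈ D := by
        rcases hx1 with h | h
        · exact hCD h
        · exact htypeD x h
      exact hmemU bs x hxD hx2
    have haU : a ∈ USet δ lt θ bs := hXU a haX
    -- every USet containing an element of C has a minimum
    have hCsideMin : ∀ c ∈ C, ∀ bs' : Fin m → M, c ∈ USet δ lt θ bs' →
        ∃ x, isMinU δ lt θ bs' x := by
      intro c hc bs' hcU
      set Gc : Set M := {c' | (c' ∈ C ∧ c' ∈ USet δ lt θ bs') ∧ (c' = c ∨ r c' c)}
        with hGc
      have hGcfin : Gc.Finite := by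
        refine ((hfin c hc).insert c).subset ?_
        rintro c' ⟨⟨hc'C, -⟩, rfl | h⟩
        · exact Set.mem_insert _ _
        · exact Set.mem_insert_of_mem c ⟨hc'C, h⟩
      obtain ⟨w, hwG, hwmin⟩ := hminfin Gc hGcfin (fun c' hc' => hCD hc'.1.1)
        ⟨c, ⟨hc, hcU⟩, Or.inl rfl⟩
      have hwC : w ∈ C := hwG.1.1
      refine ⟨w, hwG.1.2, ?_⟩
      intro u huU
      have huD : u ∈ D := hUD bs' huU
      by_cases huC : u ∈ C
      · rcases htot w (hCD hwC) u huD with h | h | h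
        · exact Or.inl h
        · exact Or.inr h.2.2
        · -- u < w : then u ∈ Gc, contradiction
          have huGc : u ∈ Gc := by
            refine ⟨⟨huC, huU⟩, ?_⟩
            rcases hwG.2 with rfl | hwc
            · exact Or.inr h
            · exact Or.inr (htrans u huD w (hCD hwC) c (hCD hc) h hwc)
          rcases hwmin u huGc with rfl | hwu
          · exact absurd h (hirr _ huD)
          · exact absurd (htrans u huD w (hCD hwC) u huD h hwu) (hirr u huD)
      · exact Or.inr (hCe w hwC u huD huC).2.2
    -- ρ yields: USet bs has a minimum
    have hρ : Formula.not (rhoF δ lt θ) ∈ p := by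
      refine (hiff _).mpr (Set.finite_empty.subset ?_)
      rintro c ⟨hc, hnc⟩
      rw [Formula.realize_not, not_not, realize_rho] at hnc
      obtain ⟨bs', hcU, hnomin⟩ := hnc
      exact hnomin (hCsideMin c hc bs' hcU)
    have hmnex : ∃ x, isMinU δ lt θ bs x := by
      by_contra h
      have := haT _ hρ
      rw [Formula.realize_not] at this
      exact this ((realize_rho δ lt θ a).mpr ⟨bs, haU, h⟩)
    obtain ⟨mn, hmn⟩ := hmnex
    have hmnD : mn ∈ D := hUD bs hmn.1
    -- the minimum realizes p
    have hmntype : ∀ χ ∈ p, χ.Realize (pval ![mn]) := by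
      intro χ hχ
      by_contra hnχ
      set F : Set M := {c ∈ C | ¬χ.Realize (pval ![c])} with hF
      have hFfin : F.Finite := (hiff χ).mp hχ
      have hFsub : F ⊆ C := fun c hc => hc.1
      set F' : Set M := F ∪ ⋃ f ∈ F, {c' ∈ C | r c' f} with hF'
      have hF'fin : F'.Finite :=
        hFfin.union (hFfin.biUnion fun f hf => hfin f (hFsub hf))
      obtain ⟨d, hdC, hdF'⟩ := ((hCinf.diff hF'fin).nonempty : (C \ F').Nonempty)
      have hdf : ∀ f ∈ F, r f d := by
        intro f hf
        rcases htot f (hCD (hFsub hf)) d (hCD hdC) with h | h | h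
        · exact absurd (h ▸ hf) (fun hdF => hdF' (Set.mem_union_left _ hdF))
        · exact h
        · exact absurd (Set.mem_union_right _
            (Set.mem_biUnion hf (show d ∈ {c' | c' ∈ C ∧ r c' f} from ⟨hdC, h⟩)))
            hdF'
      obtain ⟨φd, hφd, hφduniq⟩ := hCdcl hdC
      have hσ : Formula.not (sigF δ lt θ χ φd) ∈ p := by
        refine (hiff _).mpr (Set.finite_empty.subset ?_)
        rintro c ⟨hc, hnc⟩
        rw [Formula.realize_not, not_not, realize_sig] at hnc
        obtain ⟨bs', hcU', ⟨d', hd'1, hd'D, hd'U⟩, x, hxmin, hxnχ⟩ := hnc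
        have hd'd : d' = d := hφduniq d' hd'1
        subst hd'd
        have hxU : x ∈ USet δ lt θ bs' := hxmin.1
        have hxD : x ∈ D := hUD bs' hxU
        -- x ∈ C
        have hxC : x ∈ C := by
          rcases hxmin.2 c hcU' with rfl | h
          · exact hc
          · exact hdown c hc x hxD ⟨hxD, hCD hc, h⟩
        -- d < x
        have hdx : r d' x := by
          rcases htot d' hd'D x hxD with h | h | h
          · exact absurd h.symm (fun h' => hd'U (h' ▸ hxU))
          · exact h
          · exact absurd (hUup bs' x hxU d' hd'D h.2.2) hd'U
        -- hence x ∉ F, so χ holds at x, contradiction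
        have hxF : x ∉ F := by
          intro hxF
          exact hirr d' (hCD hdC) (htrans d' (hCD hdC) x hxD d' (hCD hdC) hdx
            (hdf x hxF))
        exact hxnχ (by_contra fun hh => hxF ⟨hxC, hh⟩)
      have hnσa := haT _ hσ
      rw [Formula.realize_not] at hnσa
      exact hnσa ((realize_sig δ lt θ χ φd a).mpr
        ⟨bs, haU, ⟨d, hφd, hCD hdC, hUCempty d hdC⟩, mn, hmn, hnχ⟩)
    have hmnT : mn ∈ typeSet A p := fun χ hχ => hmntype χ hχ
    -- the minimum satisfies θ
    have hmnθ : thSem θ bs mn := by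
      obtain ⟨-, y, hyD, hθy, hy⟩ := hmn.1
      have hyU : y ∈ USet δ lt θ bs := hmemU bs y hyD hθy
      rcases hy with rfl | hy
      · exact hθy
      · rcases hmn.2 y hyU with rfl | h
        · exact absurd (hirr mn hmnD ⟨hmnD, hmnD, hy⟩) (fun q => q)
        · exact absurd (hirr y hyD (htrans y hyD mn hmnD y hyD
            ⟨hyD, hmnD, hy⟩ ⟨hmnD, hyD, h⟩)) (fun q => q)
    have hmnX : mn ∈ X := by
      rw [hX]
      exact ⟨Set.mem_union_right _ hmnT, hmnθ⟩
    refine ⟨mn, hmnX, ?_⟩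
    intro b hbX
    have hbU := hXU b hbX
    rcases hmn.2 b hbU with h | h
    · exact Or.inl h
    · exact Or.inr ⟨hmnD, hUD bs hbU, h⟩

end PaperDef
end
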